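/- Let t₀ < t₁ < t₂ be real numbers, let g₁, g₂ : ℝ → ℝ be differentiable, and let r₀, v₀, r₁, v₁, r₂, v₂ ∈ ℝ. Let y¹ be the constrained expression on [t₀, t₁] built from free function g₁ with boundary data y¹(t₀) = r₀, y¹(t₁) = r₁, (y¹)′(t₀) = v₀, (y¹)′(t₁) = v₁, and let y² be the constrained expression on [t₁, t₂] built from free function g₂ with boundary data y²(t₁) = r₁, y²(t₂) = r₂, (y²)′(t₁) = v₁, (y²)′(t₂) = v₂. Define the piecewise function y(t) = y¹(t) for t ≤ t₁ and y(t) = y²(t) for t > t₁. Then y is differentiable at t₁ with y(t₁) = r₁ and y′(t₁) = v₁; i.e., the piecewise trajectory is C¹ across the switching time t₁. -/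

import Mathlib

/-- TFC switching function Ω₁ for two-point BVP constraints. -/
noncomputable def Omega1 (t₀ t_f t : ℝ) : ℝ :=
  1 + 2 * (t - t₀) ^ 3 / (t_f - t₀) ^ 3 - 3 * (t - t₀) ^ 2 / (t_f - t₀) ^ 2

/-- TFC switching function Ω₂ for two-point BVP constraints. -/
noncomputable def Omega2 (t₀ t_f t : ℝ) : ℝ :=
  -(2 * (t - t₀) ^ 3 / (t_f - t₀) ^ 3) + 3 * (t - t₀) ^ 2 / (t_f - t₀) ^ 2

/-- TFC switching function Ω₃ for two-point BVP constraints. -/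
noncomputable def Omega3 (t₀ t_f t : ℝ) : ℝ :=
  (t - t₀) + (t - t₀) ^ 3 / (t_f - t₀) ^ 2 - 2 * (t - t₀) ^ 2 / (t_f - t₀)

/-- TFC switching function Ω₄ for two-point BVP constraints. -/
noncomputable def Omega4 (t₀ t_f t : ℝ) : ℝ :=
  (t - t₀) ^ 3 / (t_f - t₀) ^ 2 - (t - t₀) ^ 2 / (t_f - t₀)

/-- TFC constrained expression on [a, b] for value/first-derivative constraints. -/
noncomputable def constrainedExpr (a b y_a y_b v_a v_b : ℝ) (g : ℝ → ℝ) : ℝ → ℝ :=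
  fun t =>
    g t + Omega1 a b t * (y_a - g a) + Omega2 a b t * (y_b - g b) +
      Omega3 a b t * (v_a - deriv g a) + Omega4 a b t * (v_b - deriv g b)

/-!
The Ω's are the cubic Hermite basis on `[a, b]`: among their values and slopes at the endpoints
the only nonzero ones are `Ω₁(a) = Ω₃'(a) = 1` and `Ω₂(b) = Ω₄'(b) = 1`. So each segment attains
its prescribed values and slopes at its endpoints whatever the free function, and because
adjacent segments share the junction data `r₁, v₁`, the two one-sided derivatives at the
switching time coincide.
-/

open Set

theorem HasDerivAt.ite_le {F : Type*} [NormedAddCommGroup F] [NormedSpace ℝ F]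
    {f g : ℝ → F} {f' : F} {x : ℝ} (hf : HasDerivAt f f' x) (hg : HasDerivAt g f' x)
    (hfg : f x = g x) : HasDerivAt (fun t => if t ≤ x then f t else g t) f' x := by
  have hleft : HasDerivWithinAt (fun t => if t ≤ x then f t else g t) f' (Iic x) x :=
    hf.hasDerivWithinAt.congr (fun t ht => if_pos ht) (if_pos le_rfl)
  have hright : HasDerivWithinAt (fun t => if t ≤ x then f t else g t) f' (Ici x) x := by
    refine hg.hasDerivWithinAt.congr (fun t ht => ?_) (by simp [hfg])
    rcases (mem_Ici.mp ht).eq_or_lt with rfl | hlt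
    · simp [hfg]
    · exact if_neg hlt.not_ge
  simpa only [Iic_union_Ici, hasDerivWithinAt_univ] using hleft.union hright

section

variable (a b : ℝ)

theorem hasDerivAt_sub_const_pow (n : ℕ) (x : ℝ) :
    HasDerivAt (fun t => (t - a) ^ (n + 1)) ((n + 1) * (x - a) ^ n) x := by
  simpa using (hasDerivAt_pow (n + 1) (x - a)).comp_sub_const x a

theorem hasDerivAt_Omega1 (x : ℝ) :
    HasDerivAt (Omega1 a b) (6 * (x - a) ^ 2 / (b - a) ^ 3 - 6 * (x - a) / (b - a) ^ 2) x := by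
  have := ((((hasDerivAt_sub_const_pow a 2 x).const_mul 2).div_const ((b - a) ^ 3)).const_add 1
    ).fun_sub (((hasDerivAt_sub_const_pow a 1 x).const_mul 3).div_const ((b - a) ^ 2))
  exact this.congr_deriv (by push_cast; ring)

theorem hasDerivAt_Omega2 (x : ℝ) :
    HasDerivAt (Omega2 a b) (-(6 * (x - a) ^ 2 / (b - a) ^ 3) + 6 * (x - a) / (b - a) ^ 2) x := by
  have := (((hasDerivAt_sub_const_pow a 2 x).const_mul 2).div_const ((b - a) ^ 3)).fun_neg.fun_add
    (((hasDerivAt_sub_const_pow a 1 x).const_mul 3).div_const ((b - a) ^ 2))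
  exact this.congr_deriv (by push_cast; ring)

theorem hasDerivAt_Omega3 (x : ℝ) :
    HasDerivAt (Omega3 a b) (1 + 3 * (x - a) ^ 2 / (b - a) ^ 2 - 4 * (x - a) / (b - a)) x := by
  have := ((((hasDerivAt_id x).sub_const a).fun_add
    ((hasDerivAt_sub_const_pow a 2 x).div_const ((b - a) ^ 2))).fun_sub
    (((hasDerivAt_sub_const_pow a 1 x).const_mul 2).div_const (b - a)))
  exact this.congr_deriv (by push_cast; ring)

theorem hasDerivAt_Omega4 (x : ℝ) :
    HasDerivAt (Omega4 a b) (3 * (x - a) ^ 2 / (b - a) ^ 2 - 2 * (x - a) / (b - a)) x := by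
  have := ((hasDerivAt_sub_const_pow a 2 x).div_const ((b - a) ^ 2)).fun_sub
    ((hasDerivAt_sub_const_pow a 1 x).div_const (b - a))
  exact this.congr_deriv (by push_cast; ring)

variable (y_a y_b v_a v_b : ℝ) {g : ℝ → ℝ}

theorem hasDerivAt_constrainedExpr {x : ℝ} (hg : DifferentiableAt ℝ g x) :
    HasDerivAt (constrainedExpr a b y_a y_b v_a v_b g)
      (deriv g x
        + (6 * (x - a) ^ 2 / (b - a) ^ 3 - 6 * (x - a) / (b - a) ^ 2) * (y_a - g a)
        + (-(6 * (x - a) ^ 2 / (b - a) ^ 3) + 6 * (x - a) / (b - a) ^ 2) * (y_b - g b)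
        + (1 + 3 * (x - a) ^ 2 / (b - a) ^ 2 - 4 * (x - a) / (b - a)) * (v_a - deriv g a)
        + (3 * (x - a) ^ 2 / (b - a) ^ 2 - 2 * (x - a) / (b - a)) * (v_b - deriv g b)) x :=
  ((((hg.hasDerivAt.add ((hasDerivAt_Omega1 a b x).mul_const _)).add
    ((hasDerivAt_Omega2 a b x).mul_const _)).add ((hasDerivAt_Omega3 a b x).mul_const _)).add
    ((hasDerivAt_Omega4 a b x).mul_const _))

theorem constrainedExpr_left : constrainedExpr a b y_a y_b v_a v_b g a = y_a := by
  simp [constrainedExpr, Omega1, Omega2, Omega3, Omega4]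

theorem hasDerivAt_constrainedExpr_left (hg : DifferentiableAt ℝ g a) :
    HasDerivAt (constrainedExpr a b y_a y_b v_a v_b g) v_a a := by
  simpa using hasDerivAt_constrainedExpr a b y_a y_b v_a v_b hg

variable {a b}

theorem constrainedExpr_right (hab : a ≠ b) : constrainedExpr a b y_a y_b v_a v_b g b = y_b := by
  have hba : b - a ≠ 0 := sub_ne_zero.2 hab.symm
  simp only [constrainedExpr, Omega1, Omega2, Omega3, Omega4]
  field_simp
  ring

theorem hasDerivAt_constrainedExpr_right (hab : a ≠ b) (hg : DifferentiableAt ℝ g b) :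
    HasDerivAt (constrainedExpr a b y_a y_b v_a v_b g) v_b b := by
  have hba : b - a ≠ 0 := sub_ne_zero.2 hab.symm
  refine (hasDerivAt_constrainedExpr a b y_a y_b v_a v_b hg).congr_deriv ?_
  field_simp
  ring

end

theorem piecewise_constrainedExpr_C1_at_switch_general (t₀ t₁ t₂ : ℝ)
    (h01 : t₀ < t₁) (g₁ g₂ : ℝ → ℝ)
    (hg₁ : Differentiable ℝ g₁) (hg₂ : Differentiable ℝ g₂)
    (r₀ v₀ r₁ v₁ r₂ v₂ : ℝ) :
    let y1 : ℝ → ℝ := constrainedExpr t₀ t₁ r₀ r₁ v₀ v₁ g₁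
    let y2 : ℝ → ℝ := constrainedExpr t₁ t₂ r₁ r₂ v₁ v₂ g₂
    let y : ℝ → ℝ := fun t => if t ≤ t₁ then y1 t else y2 t
    y t₁ = r₁ ∧ HasDerivAt y v₁ t₁ := by
  intro y1 y2 y
  have hy1 : y1 t₁ = r₁ := constrainedExpr_right r₀ r₁ v₀ v₁ h01.ne
  have hy2 : y2 t₁ = r₁ := constrainedExpr_left t₁ t₂ r₁ r₂ v₁ v₂
  refine ⟨(if_pos le_rfl).trans hy1, ?_⟩
  exact (hasDerivAt_constrainedExpr_right r₀ r₁ v₀ v₁ h01.ne (hg₁ t₁)).ite_le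
    (hasDerivAt_constrainedExpr_left t₁ t₂ r₁ r₂ v₁ v₂ (hg₂ t₁)) (hy1.trans hy2.symm)

theorem piecewise_constrainedExpr_C1_at_switch (t₀ t₁ t₂ : ℝ)
    (h01 : t₀ < t₁) (h12 : t₁ < t₂) (g₁ g₂ : ℝ → ℝ)
    (hg₁ : Differentiable ℝ g₁) (hg₂ : Differentiable ℝ g₂)
    (r₀ v₀ r₁ v₁ r₂ v₂ : ℝ) :
    let y1 : ℝ → ℝ := constrainedExpr t₀ t₁ r₀ r₁ v₀ v₁ g₁
    let y2 : ℝ → ℝ := constrainedExpr t₁ t₂ r₁ r₂ v₁ v₂ g₂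
    let y : ℝ → ℝ := fun t => if t ≤ t₁ then y1 t else y2 t
    y t₁ = r₁ ∧ HasDerivAt y v₁ t₁ :=
  piecewise_constrainedExpr_C1_at_switch_general t₀ t₁ t₂ h01 g₁ g₂ hg₁ hg₂ r₀ v₀ r₁ v₁ r₂ v₂
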